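/- arXiv:1707.07809 — 4 statements merged into one kernel-verified Lean document; each statement's English description precedes it below -/
import Mathlib

section
/- Let σ₁,…,σ_d ∈ S_n and σ'₁,…,σ'_d ∈ S_m. Then the d-tuple (σ₁,…,σ_d) contains the d-tuple (σ'₁,…,σ'_d) in parallel if and only if the set partition [σ₁,…,σ_d] of [(d+1)n] contains the set partition [σ'₁,…,σ'_d] of [(d+1)m] in the Klazar sense. -/
open Finset

/-- Two elements lie in the same block of the set partition `π`. -/
def SameBlock {n : ℕ} (π : Finpartition (univ : Finset (Fin n))) (a b : Fin n) : Prop :=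
  ∃ B ∈ π.parts, a ∈ B ∧ b ∈ B

/-- Klazar containment: `π` contains `ρ` if some order-preserving injection
realizes `ρ` as the restriction of `π`. -/
def KContains {n k : ℕ} (π : Finpartition (univ : Finset (Fin n)))
    (ρ : Finpartition (univ : Finset (Fin k))) : Prop :=
  ∃ f : Fin k ↪o Fin n, ∀ a b : Fin k, SameBlock ρ a b ↔ SameBlock π (f a) (f b)

/-- The block `T i = {i, n + σ₁ i, …, d*n + σ_d i}` (0-indexed) of the
correspondent partition `[σ₁,…,σ_d]`. -/
def corrBlock {n d : ℕ} (σ : Fin d → Equiv.Perm (Fin n)) (i : Fin n) :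
    Finset (Fin ((d + 1) * n)) :=
  insert ⟨(i : ℕ), by nlinarith [i.2]⟩
    ((univ : Finset (Fin d)).image fun (j : Fin d) =>
      (⟨((j : ℕ) + 1) * n + ((σ j i : Fin n) : ℕ), by nlinarith [j.2, (σ j i).2]⟩ :
        Fin ((d + 1) * n)))

/-- `π` is the set partition correspondent to the tuple of permutations `σ`. -/
def IsCorrespondent {n d : ℕ} (σ : Fin d → Equiv.Perm (Fin n))
    (π : Finpartition (univ : Finset (Fin ((d + 1) * n)))) : Prop :=
  π.parts = (univ : Finset (Fin n)).image (corrBlock σ)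

/-- The permutability of `π` is at most `d`. -/
def HasPermLE {k : ℕ} (d : ℕ) (π : Finpartition (univ : Finset (Fin k))) : Prop :=
  ∃ (m : ℕ) (σ : Fin d → Equiv.Perm (Fin m))
    (ρ : Finpartition (univ : Finset (Fin ((d + 1) * m)))),
    IsCorrespondent σ ρ ∧ KContains ρ π

/-- `π` has permutability exactly `d`. -/
def Permutability {k : ℕ} (π : Finpartition (univ : Finset (Fin k))) (d : ℕ) : Prop :=
  HasPermLE d π ∧ ∀ e < d, ¬ HasPermLE e π

/-- `BAvoid n π` is `B_n(π)`, the number of set partitions of `[n]` avoiding `π`. -/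
noncomputable def BAvoid {k : ℕ} (n : ℕ) (π : Finpartition (univ : Finset (Fin k))) : ℕ :=
  Nat.card {ρ : Finpartition (univ : Finset (Fin n)) // ¬ KContains ρ π}

/-- `B'_n(π)`: the number of set partitions of `[n]` with no singleton blocks avoiding `π`. -/
noncomputable def BAvoidNS {k : ℕ} (n : ℕ) (π : Finpartition (univ : Finset (Fin k))) : ℕ :=
  Nat.card {ρ : Finpartition (univ : Finset (Fin n)) //
    ¬ KContains ρ π ∧ ∀ B ∈ ρ.parts, 2 ≤ B.card}

/-- Parallel containment of tuples of permutations. -/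
def ParallelContains {n m d : ℕ} (σ : Fin d → Equiv.Perm (Fin n))
    (σ' : Fin d → Equiv.Perm (Fin m)) : Prop :=
  ∃ c : Fin m ↪o Fin n, ∀ (i : Fin d) (a b : Fin m),
    σ' i a < σ' i b ↔ σ i (c a) < σ i (c b)

/-!
Each element of `[(d + 1) * n]` is determined by its segment (level) `q` and its block `T i`,
and the order on `[(d + 1) * n]` is lexicographic in the level and the offset `σ_q i` (with
`σ_0 = id`). A Klazar embedding of `[σ']` into `[σ]` maps each block `T a` into a single block
`T (c a)`; being monotone along a block, whose elements have one per level, it preserves levels,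
so comparing images within level `q` shows that `c` transports the order of `σ'_q` to that of
`σ_q`. Conversely such a `c` gives the block-preserving monotone map `(q, a) ↦ (q, c a)`.
-/

theorem finProdFinEquiv_lt_finProdFinEquiv_iff {m n : ℕ} {p p' : Fin m × Fin n} :
    finProdFinEquiv p < finProdFinEquiv p' ↔ toLex p < toLex p' := by
  obtain ⟨⟨a, ha⟩, ⟨b, hb⟩⟩ := p
  obtain ⟨⟨a', ha'⟩, ⟨b', hb'⟩⟩ := p'
  simp only [Prod.Lex.toLex_lt_toLex, Fin.lt_def, Fin.ext_iff, finProdFinEquiv_apply_val]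
  constructor
  · intro h
    rcases lt_trichotomy a a' with h' | rfl | h'
    · exact Or.inl h'
    · exact Or.inr ⟨rfl, by omega⟩
    · nlinarith
  · rintro (h | ⟨rfl, h⟩)
    · nlinarith
    · omega

section Correspondent

variable {n d : ℕ}

def levelPerm (σ : Fin d → Equiv.Perm (Fin n)) : Fin (d + 1) → Equiv.Perm (Fin n) :=
  Fin.cons 1 σ

/-- `corrPos σ (q, i)` is the element of the block `T i` in the `q`-th segment
`[q * n, (q + 1) * n)` of `[(d + 1) * n]`, at offset `levelPerm σ q i` within it. -/
def corrPos (σ : Fin d → Equiv.Perm (Fin n)) : Fin (d + 1) × Fin n ≃ Fin ((d + 1) * n) :=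
  (Equiv.prodCongrRight (levelPerm σ)).trans finProdFinEquiv

@[simp]
theorem levelPerm_zero (σ : Fin d → Equiv.Perm (Fin n)) : levelPerm σ 0 = 1 := rfl

@[simp]
theorem levelPerm_succ (σ : Fin d → Equiv.Perm (Fin n)) (j : Fin d) :
    levelPerm σ j.succ = σ j := rfl

theorem corrPos_lt_corrPos_iff {σ : Fin d → Equiv.Perm (Fin n)} {p p' : Fin (d + 1) × Fin n} :
    corrPos σ p < corrPos σ p' ↔
      p.1 < p'.1 ∨ p.1 = p'.1 ∧ levelPerm σ p.1 p.2 < levelPerm σ p'.1 p'.2 := by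
  simp [corrPos, finProdFinEquiv_lt_finProdFinEquiv_iff, Prod.Lex.toLex_lt_toLex]

theorem corrPos_lt_corrPos_iff_of_snd_eq {σ : Fin d → Equiv.Perm (Fin n)}
    {p p' : Fin (d + 1) × Fin n} (h : p.2 = p'.2) :
    corrPos σ p < corrPos σ p' ↔ p.1 < p'.1 := by
  rw [corrPos_lt_corrPos_iff, or_iff_left_iff_imp]
  rintro ⟨h₁, hlt⟩
  exact absurd hlt (by rw [← h₁, h]; exact lt_irrefl _)

theorem corrPos_lt_corrPos_iff_right {σ : Fin d → Equiv.Perm (Fin n)} {q : Fin (d + 1)}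
    {i i' : Fin n} :
    corrPos σ (q, i) < corrPos σ (q, i') ↔ levelPerm σ q i < levelPerm σ q i' := by
  simp [corrPos_lt_corrPos_iff]

theorem corrBlock_eq_image (σ : Fin d → Equiv.Perm (Fin n)) (i : Fin n) :
    corrBlock σ i = univ.image fun q => corrPos σ (q, i) := by
  ext x
  simp only [corrBlock, mem_insert, mem_image, mem_univ, true_and, Fin.exists_fin_succ]
  simp only [corrPos, levelPerm, Equiv.trans_apply, Equiv.prodCongrRight_apply, Fin.ext_iff,
    finProdFinEquiv_apply_val, Fin.cons_zero, Fin.cons_succ, Fin.val_zero, Fin.val_succ,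
    Equiv.Perm.one_apply, mul_zero]
  exact or_congr eq_comm (exists_congr fun j => by rw [add_comm, mul_comm])

theorem corrPos_mem_corrBlock_iff {σ : Fin d → Equiv.Perm (Fin n)} {p : Fin (d + 1) × Fin n}
    {i : Fin n} : corrPos σ p ∈ corrBlock σ i ↔ p.2 = i := by
  simp [corrBlock_eq_image, (corrPos σ).injective.eq_iff, Prod.ext_iff, eq_comm]

theorem sameBlock_corrPos_iff {σ : Fin d → Equiv.Perm (Fin n)}
    {π : Finpartition (univ : Finset (Fin ((d + 1) * n)))} (hπ : IsCorrespondent σ π)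
    {p p' : Fin (d + 1) × Fin n} :
    SameBlock π (corrPos σ p) (corrPos σ p') ↔ p.2 = p'.2 := by
  simp [SameBlock, show π.parts = _ from hπ, corrPos_mem_corrBlock_iff, eq_comm]

end Correspondent

section Containment

variable {n m d : ℕ} {σ : Fin d → Equiv.Perm (Fin n)} {σ' : Fin d → Equiv.Perm (Fin m)}
  {π : Finpartition (univ : Finset (Fin ((d + 1) * n)))}
  {π' : Finpartition (univ : Finset (Fin ((d + 1) * m)))}

def PreservesLevelOrder (σ : Fin d → Equiv.Perm (Fin n)) (σ' : Fin d → Equiv.Perm (Fin m))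
    (c : Fin m → Fin n) : Prop :=
  ∀ q a b, levelPerm σ' q a < levelPerm σ' q b ↔ levelPerm σ q (c a) < levelPerm σ q (c b)

theorem PreservesLevelOrder.strictMono {c : Fin m → Fin n} (hc : PreservesLevelOrder σ σ' c) :
    StrictMono c :=
  fun a b hab => by simpa using (hc 0 a b).1 hab

theorem parallelContains_iff_exists_preservesLevelOrder :
    ParallelContains σ σ' ↔ ∃ c, PreservesLevelOrder σ σ' c := by
  constructor
  · rintro ⟨c, hc⟩
    exact ⟨c, Fin.cases (by simp) (by simpa using hc)⟩
  · rintro ⟨c, hc⟩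
    exact ⟨.ofStrictMono c hc.strictMono, fun j => by simpa using hc j.succ⟩

theorem kContains_of_preservesLevelOrder (hπ : IsCorrespondent σ π)
    (hπ' : IsCorrespondent σ' π') {c : Fin m → Fin n} (hc : PreservesLevelOrder σ σ' c) :
    KContains π π' := by
  let F : Fin (d + 1) × Fin m → Fin ((d + 1) * n) := fun p => corrPos σ (p.1, c p.2)
  have hF : ∀ p p', corrPos σ' p < corrPos σ' p' ↔ F p < F p' := by
    rintro ⟨q, a⟩ ⟨q', a'⟩
    refine (corrPos_lt_corrPos_iff).trans (Iff.trans ?_ corrPos_lt_corrPos_iff.symm)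
    exact or_congr_right (and_congr_right fun h => by subst h; exact hc q a a')
  have hmono : StrictMono (F ∘ (corrPos σ').symm) :=
    (corrPos σ').surjective.forall₂.2 fun p p' h => by simpa using (hF p p').1 h
  refine ⟨.ofStrictMono _ hmono, (corrPos σ').surjective.forall₂.2 fun p p' => ?_⟩
  simp [F, sameBlock_corrPos_iff hπ, sameBlock_corrPos_iff hπ', hc.strictMono.injective.eq_iff]

theorem exists_preservesLevelOrder_of_kContains (hπ : IsCorrespondent σ π)
    (hπ' : IsCorrespondent σ' π') (h : KContains π π') :
    ∃ c, PreservesLevelOrder σ σ' c := by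
  obtain ⟨f, hf⟩ := h
  let g : Fin (d + 1) × Fin m → Fin (d + 1) × Fin n := fun p =>
    (corrPos σ).symm (f (corrPos σ' p))
  have hfg : ∀ p, f (corrPos σ' p) = corrPos σ (g p) := fun p =>
    ((corrPos σ).apply_symm_apply _).symm
  have hblock : ∀ p p', (g p).2 = (g p').2 ↔ p.2 = p'.2 := fun p p' => by
    rw [← sameBlock_corrPos_iff hπ, ← hfg, ← hfg, ← hf, sameBlock_corrPos_iff hπ']
  have hlevel : ∀ q a, (g (q, a)).1 = q := fun q a => by
    have hmono : StrictMono fun q => (g (q, a)).1 := fun q q' hqq' => by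
      have hlt := f.strictMono
        ((corrPos_lt_corrPos_iff_of_snd_eq (σ := σ') (p := (q, a)) (p' := (q', a)) rfl).2 hqq')
      rwa [hfg, hfg, corrPos_lt_corrPos_iff_of_snd_eq ((hblock (q, a) (q', a)).2 rfl)] at hlt
    exact hmono.apply_eq
  let c : Fin m → Fin n := fun a => (g (0, a)).2
  have hg : ∀ q a, g (q, a) = (q, c a) := fun q a => Prod.ext (hlevel q a) ((hblock _ _).2 rfl)
  refine ⟨c, fun q a b => ?_⟩
  calc levelPerm σ' q a < levelPerm σ' q b
      ↔ corrPos σ' (q, a) < corrPos σ' (q, b) := (corrPos_lt_corrPos_iff_right).symm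
    _ ↔ corrPos σ (q, c a) < corrPos σ (q, c b) := by
      rw [← f.lt_iff_lt, hfg, hfg, hg q a, hg q b]
    _ ↔ levelPerm σ q (c a) < levelPerm σ q (c b) := corrPos_lt_corrPos_iff_right

end Containment

/-- parallel containment of tuples of permutations is equivalent to
Klazar containment of the correspondent set partitions. -/
theorem stmt2 (n m d : ℕ) (σ : Fin d → Equiv.Perm (Fin n)) (σ' : Fin d → Equiv.Perm (Fin m))
    (π : Finpartition (univ : Finset (Fin ((d + 1) * n))))
    (π' : Finpartition (univ : Finset (Fin ((d + 1) * m))))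
    (hπ : IsCorrespondent σ π) (hπ' : IsCorrespondent σ' π') :
    ParallelContains σ σ' ↔ KContains π π' := by
  rw [parallelContains_iff_exists_preservesLevelOrder]
  exact ⟨fun ⟨_, hc⟩ => kContains_of_preservesLevelOrder hπ hπ' hc,
    exists_preservesLevelOrder_of_kContains hπ hπ'⟩
end

section
/- For any set partition π of [k] with all blocks of size at least 2, if π' is a set partition of [n−i] avoiding π with no singleton blocks, then any partition of [n] obtained from π' by inserting i singleton blocks (at any choice of i positions among [n]) also avoids π. Hence B_n(π) ≥ C(n,i)·B'_{n−i}(π), where B'_m(π) is the number of partitions of [m] with no singleton blocks avoiding π. -/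
open Finset

/-!
Every block of `π` has at least two elements, so an occurrence of `π` in `ρ` avoids the singleton
blocks of `ρ`; it therefore lies in the image of `f` and pulls back to an occurrence of `π` in `π'`.
For the count, when `π'` has no singletons the partition obtained by inserting singletons
determines both the set of positions of `π'` (its elements in non-singleton blocks) and `π'`
itself, so insertion is injective on pairs (an `(n - i)`-subset of `[n]`, a singleton-free
`π`-avoiding partition of `[n - i]`).
-/

theorem Finpartition.eq_of_part_eq_part_iff {α : Type*} [DecidableEq α] {s : Finset α}
    {P Q : Finpartition s} (h : ∀ a ∈ s, ∀ b ∈ s, P.part a = P.part b ↔ Q.part a = Q.part b) :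
    P = Q := by
  have hpart : ∀ a ∈ s, P.part a = Q.part a := fun a ha => by
    ext b
    by_cases hb : b ∈ s
    · rw [P.mem_part_iff_part_eq_part hb ha, Q.mem_part_iff_part_eq_part hb ha, h b hb a ha]
    · exact iff_of_false (fun h' => hb (P.part_subset a h')) fun h' => hb (Q.part_subset a h')
  have hparts : ∀ R : Finpartition s, R.parts = s.image R.part := fun R => by
    ext t
    refine ⟨fun ht => ?_, fun ht => ?_⟩
    · obtain ⟨a, ha, rfl⟩ := R.part_surjOn ht
      exact mem_image_of_mem _ ha
    · obtain ⟨a, ha, rfl⟩ := mem_image.1 ht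
      exact R.part_mem.2 ha
  ext1
  rw [hparts P, hparts Q]
  exact image_congr hpart

theorem sameBlock_iff_part_eq {n : ℕ} (ρ : Finpartition (univ : Finset (Fin n))) (a b : Fin n) :
    SameBlock ρ a b ↔ ρ.part a = ρ.part b :=
  ρ.mem_part_iff_exists.symm.trans (ρ.mem_part_iff_part_eq_part (mem_univ a) (mem_univ b))

theorem OrderEmbedding.exists_comp_eq_of_range_subset {α β γ : Type*} [PartialOrder α] [Preorder β]
    [Preorder γ] (f : β ↪o γ) (g : α ↪o γ) (h : Set.range g ⊆ Set.range f) :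
    ∃ e : α ↪o β, ∀ a, f (e a) = g a := by
  choose e he using fun a => h ⟨a, rfl⟩
  exact ⟨OrderEmbedding.ofMapLEIff e fun a b => by rw [← f.le_iff_le, he, he, g.le_iff_le], he⟩

theorem singleton_notMem_parts_of_sameBlock_iff {k n : ℕ}
    {π : Finpartition (univ : Finset (Fin k))} {ρ : Finpartition (univ : Finset (Fin n))}
    (hπ : ∀ B ∈ π.parts, 2 ≤ B.card) {g : Fin k → Fin n} (hg : Function.Injective g)
    (hsame : ∀ a b, SameBlock π a b ↔ SameBlock ρ (g a) (g b)) (a : Fin k) :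
    {g a} ∉ ρ.parts := by
  intro hsing
  obtain ⟨b, hb, hba⟩ := exists_mem_ne (hπ _ (π.part_mem.2 (mem_univ a))) a
  have hρ : ρ.part (g b) = ρ.part (g a) := by
    rw [← sameBlock_iff_part_eq, ← hsame, sameBlock_iff_part_eq, π.part_eq_of_mem
      (π.part_mem.2 (mem_univ a)) hb]
  rw [ρ.part_eq_of_mem hsing (mem_singleton_self _)] at hρ
  exact hba (hg (mem_singleton.1 (hρ ▸ ρ.mem_part (mem_univ (g b)))))

theorem not_kContains_of_restrict_of_singletons {k m n : ℕ}
    {π : Finpartition (univ : Finset (Fin k))} (hπ : ∀ B ∈ π.parts, 2 ≤ B.card)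
    {π' : Finpartition (univ : Finset (Fin m))} (hπ' : ¬ KContains π' π)
    {ρ : Finpartition (univ : Finset (Fin n))} (f : Fin m ↪o Fin n)
    (hsame : ∀ a b, SameBlock ρ (f a) (f b) ↔ SameBlock π' a b)
    (hsing : ∀ x, x ∉ Set.range f → ({x} : Finset (Fin n)) ∈ ρ.parts) :
    ¬ KContains ρ π := by
  rintro ⟨g, hg⟩
  have hrange : Set.range g ⊆ Set.range f := by
    rintro _ ⟨a, rfl⟩
    by_contra hx
    exact singleton_notMem_parts_of_sameBlock_iff hπ g.injective hg a (hsing _ hx)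
  obtain ⟨e, he⟩ := f.exists_comp_eq_of_range_subset g hrange
  exact hπ' ⟨e, fun a b => by rw [hg, ← he, ← he, hsame]⟩

section InsertSingletons

variable {m n : ℕ} (f : Fin m ↪o Fin n) (π' : Finpartition (univ : Finset (Fin m)))

/-- Elements of `Set.range f` are labelled by their block in `π'`, the others by themselves. -/
noncomputable def insertSingletonsLabel : Fin n → Finset (Fin m) ⊕ Fin n :=
  Function.extend f (fun a => .inl (π'.part a)) .inr

open Classical in
noncomputable def insertSingletons : Finpartition (univ : Finset (Fin n)) :=
  Finpartition.ofSetoid (Setoid.ker (insertSingletonsLabel f π'))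

theorem sameBlock_insertSingletons_iff (x y : Fin n) :
    SameBlock (insertSingletons f π') x y ↔
      insertSingletonsLabel f π' y = insertSingletonsLabel f π' x := by
  classical
  rw [SameBlock, ← Finpartition.mem_part_iff_exists, insertSingletons,
    Finpartition.mem_part_ofSetoid_iff_rel]
  rfl

theorem insertSingletonsLabel_apply (a : Fin m) :
    insertSingletonsLabel f π' (f a) = .inl (π'.part a) :=
  f.injective.extend_apply _ _ a

theorem insertSingletonsLabel_of_notMem_range {x : Fin n} (hx : x ∉ Set.range f) :
    insertSingletonsLabel f π' x = .inr x :=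
  Function.extend_apply' _ _ x hx

theorem sameBlock_insertSingletons_apply (a b : Fin m) :
    SameBlock (insertSingletons f π') (f a) (f b) ↔ SameBlock π' a b := by
  rw [sameBlock_insertSingletons_iff, insertSingletonsLabel_apply, insertSingletonsLabel_apply,
    Sum.inl.injEq, sameBlock_iff_part_eq, eq_comm]

theorem part_insertSingletons_of_notMem_range {x : Fin n} (hx : x ∉ Set.range f) :
    (insertSingletons f π').part x = {x} := by
  ext y
  rw [mem_singleton, Finpartition.mem_part_iff_exists, ← SameBlock,
    sameBlock_insertSingletons_iff, insertSingletonsLabel_of_notMem_range f π' hx]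
  by_cases hy : y ∈ Set.range f
  · obtain ⟨b, rfl⟩ := hy
    rw [insertSingletonsLabel_apply]
    exact iff_of_false Sum.inr_ne_inl fun h => hx ⟨b, h⟩
  · rw [insertSingletonsLabel_of_notMem_range f π' hy, Sum.inr.injEq, eq_comm]

theorem singleton_mem_insertSingletons_parts {x : Fin n} (hx : x ∉ Set.range f) :
    {x} ∈ (insertSingletons f π').parts :=
  part_insertSingletons_of_notMem_range f π' hx ▸ (insertSingletons f π').part_mem.2 (mem_univ x)

theorem mem_range_iff_one_lt_card_part_insertSingletons (hπ' : ∀ B ∈ π'.parts, 2 ≤ B.card)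
    (x : Fin n) : x ∈ Set.range f ↔ 1 < ((insertSingletons f π').part x).card := by
  refine ⟨?_, fun hx => not_not.1 fun hxf => ?_⟩
  · rintro ⟨a, rfl⟩
    obtain ⟨b, hb, hba⟩ := exists_mem_ne (hπ' _ (π'.part_mem.2 (mem_univ a))) a
    refine one_lt_card_iff.2 ⟨f b, f a, ?_, (insertSingletons f π').mem_part (mem_univ _),
      fun h => hba (f.injective h)⟩
    rw [Finpartition.mem_part_iff_exists, ← SameBlock, sameBlock_insertSingletons_apply,
      SameBlock, ← Finpartition.mem_part_iff_exists]
    exact hb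
  · rw [part_insertSingletons_of_notMem_range f π' hxf, card_singleton] at hx
    exact hx.false

theorem insertSingletons_injective : Function.Injective (insertSingletons f) := by
  intro π₁ π₂ h
  refine Finpartition.eq_of_part_eq_part_iff fun a _ b _ => ?_
  rw [← sameBlock_iff_part_eq, ← sameBlock_iff_part_eq, ← sameBlock_insertSingletons_apply,
    h, sameBlock_insertSingletons_apply]

end InsertSingletons

theorem not_kContains_insertSingletons {k m n : ℕ} {π : Finpartition (univ : Finset (Fin k))}
    (hπ : ∀ B ∈ π.parts, 2 ≤ B.card) {π' : Finpartition (univ : Finset (Fin m))}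
    (hπ' : ¬ KContains π' π) (f : Fin m ↪o Fin n) :
    ¬ KContains (insertSingletons f π') π :=
  not_kContains_of_restrict_of_singletons hπ hπ' f (sameBlock_insertSingletons_apply f π')
    fun _ => singleton_mem_insertSingletons_parts f π'

theorem choose_mul_bAvoidNS_le_bAvoid {k m n : ℕ} {π : Finpartition (univ : Finset (Fin k))}
    (hπ : ∀ B ∈ π.parts, 2 ≤ B.card) :
    n.choose m * BAvoidNS m π ≤ BAvoid n π := by
  let Φ : {s : Finset (Fin n) // s.card = m} ×
      {π' : Finpartition (univ : Finset (Fin m)) //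
        ¬ KContains π' π ∧ ∀ B ∈ π'.parts, 2 ≤ B.card} →
      {ρ : Finpartition (univ : Finset (Fin n)) // ¬ KContains ρ π} :=
    fun p => ⟨insertSingletons (p.1.1.orderEmbOfFin p.1.2) p.2.1,
      not_kContains_insertSingletons hπ p.2.2.1 _⟩
  have hΦ : Function.Injective Φ := by
    rintro ⟨⟨s₁, hs₁⟩, π₁⟩ ⟨⟨s₂, hs₂⟩, π₂⟩ h
    have h' : insertSingletons (s₁.orderEmbOfFin hs₁) π₁.1 =
        insertSingletons (s₂.orderEmbOfFin hs₂) π₂.1 := congrArg Subtype.val h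
    obtain rfl : s₁ = s₂ := by
      ext x
      rw [← mem_coe, ← range_orderEmbOfFin s₁ hs₁, ← mem_coe, ← range_orderEmbOfFin s₂ hs₂,
        mem_range_iff_one_lt_card_part_insertSingletons _ _ π₁.2.2,
        mem_range_iff_one_lt_card_part_insertSingletons _ _ π₂.2.2, h']
    exact Prod.ext rfl (Subtype.ext (insertSingletons_injective _ h'))
  have hcard := Nat.card_le_card_of_injective Φ hΦ
  rwa [Nat.card_prod, Nat.card_eq_fintype_card (α := {s : Finset (Fin n) // s.card = m}),
    Fintype.card_finset_len, Fintype.card_fin] at hcard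

/-- if `π` has all blocks of size at least 2, inserting `i` singleton
blocks into a `π`-avoiding singleton-free partition of `[n-i]` yields a `π`-avoiding
partition of `[n]`; hence `B_n(π) ≥ C(n,i) · B'_{n-i}(π)`. -/
theorem stmt7 (k n i : ℕ) (hi : i ≤ n) (π : Finpartition (univ : Finset (Fin k)))
    (hπ : ∀ B ∈ π.parts, 2 ≤ B.card) :
    (∀ π' : Finpartition (univ : Finset (Fin (n - i))), ¬ KContains π' π →
      (∀ B ∈ π'.parts, 2 ≤ B.card) →
      ∀ (ρ : Finpartition (univ : Finset (Fin n))) (f : Fin (n - i) ↪o Fin n),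
        (∀ a b : Fin (n - i), SameBlock ρ (f a) (f b) ↔ SameBlock π' a b) →
        (∀ x : Fin n, x ∉ Set.range f → ({x} : Finset (Fin n)) ∈ ρ.parts) →
        ¬ KContains ρ π) ∧
    Nat.choose n i * BAvoidNS (n - i) π ≤ BAvoid n π := by
  refine ⟨fun π' hπ' _ ρ f hsame hsing =>
    not_kContains_of_restrict_of_singletons hπ hπ' f hsame hsing, ?_⟩
  rw [← Nat.choose_symm hi]
  exact choose_mul_bAvoidNS_le_bAvoid hπ
end

section
/- Let π be a set partition with permutability pm(π) = d ≥ 1. Then there exists a constant c₁ > 0 (depending on π) such that B_n(π) ≥ c₁ⁿ · n^{n(1−1/d)} for all n ≥ 1. -/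
open Finset

/-!
Write `d = e + 1` and `n = (e + 1) m + r` with `r ≤ e`. Since `π` lies in no correspondent
partition of `e` permutations, it also avoids every partition that lies in one. For each
`τ ∈ (S_m)^e`, the correspondent partition `[τ₁, …, τₑ]` followed by `r` singletons lies in the
correspondent partition of the `τⱼ` extended by fixed points to `S_{m+r}`, and distinct `τ` give
distinct partitions, so `B_n(π) ≥ (m!)^e`. Finally `k^k ≤ exp(k) k!` turns `(m!)^e` into
`c^n n^{n e / (e + 1)}`.
-/

section Fibers

variable {N : ℕ} {α : Type*} [DecidableEq α]

def fiberPart (c : Fin N → α) : Finpartition (univ : Finset (Fin N)) :=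
  Finpartition.ofSetoid (Setoid.ker c)

theorem sameBlock_fiberPart (c : Fin N → α) (a b : Fin N) :
    SameBlock (fiberPart c) a b ↔ c a = c b := by
  rw [SameBlock, ← Finpartition.mem_part_iff_exists, fiberPart,
    Finpartition.mem_part_ofSetoid_iff_rel, Setoid.ker_def, eq_comm]

theorem parts_fiberPart [Fintype α] {c : Fin N → α} (hc : Function.Surjective c) :
    (fiberPart c).parts = (univ : Finset α).image fun i => ({x | c x = i} : Finset (Fin N)) := by
  rw [fiberPart, Finpartition.ofSetoid, Finpartition.ofSetSetoid_parts,
    ← image_univ_of_surjective hc, image_image]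
  simp only [Setoid.ker_def, Function.comp_def, eq_comm]

theorem kContains_fiberPart_comp {n : ℕ} (c : Fin N → α) (f : Fin n ↪o Fin N) :
    KContains (fiberPart c) (fiberPart (c ∘ f)) :=
  ⟨f, fun a b => by simp only [sameBlock_fiberPart, Function.comp_apply]⟩

end Fibers

theorem KContains.trans {n₁ n₂ n₃ : ℕ} {P : Finpartition (univ : Finset (Fin n₁))}
    {Q : Finpartition (univ : Finset (Fin n₂))} {R : Finpartition (univ : Finset (Fin n₃))}
    (hPQ : KContains P Q) (hQR : KContains Q R) : KContains P R :=
  let ⟨f, hf⟩ := hPQ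
  let ⟨g, hg⟩ := hQR
  ⟨g.trans f, fun a b => (hg a b).trans (hf (g a) (g b))⟩

section Correspondent

variable {n d : ℕ}

def layerPerm (σ : Fin d → Equiv.Perm (Fin n)) : Fin (d + 1) → Equiv.Perm (Fin n) :=
  Fin.cons 1 σ

@[simp]
theorem layerPerm_zero (σ : Fin d → Equiv.Perm (Fin n)) : layerPerm σ 0 = 1 := rfl

@[simp]
theorem layerPerm_succ (σ : Fin d → Equiv.Perm (Fin n)) (j : Fin d) :
    layerPerm σ j.succ = σ j := rfl

/-- Position `y` of layer `j` lies in the block `T_i` with `i = σⱼ⁻¹ y`, where `σ₀ = 1`. -/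
def corrClass (σ : Fin d → Equiv.Perm (Fin n)) (x : Fin ((d + 1) * n)) : Fin n :=
  (layerPerm σ x.divNat)⁻¹ x.modNat

theorem corrClass_finProdFinEquiv (σ : Fin d → Equiv.Perm (Fin n)) (j : Fin (d + 1))
    (y : Fin n) : corrClass σ (finProdFinEquiv (j, y)) = (layerPerm σ j)⁻¹ y := by
  have h := finProdFinEquiv.symm_apply_apply (j, y)
  simp only [finProdFinEquiv_symm_apply, Prod.mk.injEq] at h
  rw [corrClass, h.1, h.2]

theorem mem_corrBlock_iff (σ : Fin d → Equiv.Perm (Fin n)) (i : Fin n)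
    (x : Fin ((d + 1) * n)) : x ∈ corrBlock σ i ↔ corrClass σ x = i := by
  obtain ⟨⟨j, y⟩, rfl⟩ := finProdFinEquiv.surjective x
  have h0 : (⟨i, by nlinarith [i.2]⟩ : Fin ((d + 1) * n)) = finProdFinEquiv (0, i) := by
    ext; simp
  have hs : ∀ j : Fin d,
      (⟨((j : ℕ) + 1) * n + ((σ j i : Fin n) : ℕ), by nlinarith [j.2, (σ j i).2]⟩ :
        Fin ((d + 1) * n)) = finProdFinEquiv (j.succ, σ j i) := by
    intro j; ext; simp; ring
  rw [corrBlock, mem_insert, mem_image]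
  simp only [h0, hs, mem_univ, true_and, finProdFinEquiv.apply_eq_iff_eq,
    corrClass_finProdFinEquiv]
  induction j using Fin.cases with
  | zero => simp [eq_comm]
  | succ k => simp [eq_comm, Equiv.eq_symm_apply (σ k)]

theorem isCorrespondent_fiberPart_corrClass (σ : Fin d → Equiv.Perm (Fin n)) :
    IsCorrespondent σ (fiberPart (corrClass σ)) := by
  have hsurj : Function.Surjective (corrClass σ) := fun i =>
    ⟨finProdFinEquiv (0, i), by simp [corrClass_finProdFinEquiv]⟩
  rw [IsCorrespondent, parts_fiberPart hsurj]
  congr! 2 with i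
  ext x
  simp [mem_corrBlock_iff]

end Correspondent

open scoped Nat

section Padding

variable {e m r : ℕ}

def Equiv.Perm.extendFin (τ : Equiv.Perm (Fin m)) (r : ℕ) : Equiv.Perm (Fin (m + r)) :=
  finSumFinEquiv.permCongr (Equiv.sumCongr τ 1)

theorem Equiv.Perm.extendFin_inv_castAdd (τ : Equiv.Perm (Fin m)) (y : Fin m) :
    (τ.extendFin r)⁻¹ (Fin.castAdd r y) = Fin.castAdd r (τ⁻¹ y) := by
  rw [Equiv.Perm.inv_eq_iff_eq]
  simp [Equiv.Perm.extendFin, Equiv.permCongr_apply]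

/-- Inserts `r` gaps after each of the first `e` layers of length `m`. -/
def spreadLayers (e m r : ℕ) : Fin ((e + 1) * m + r) ↪o Fin ((e + 1) * (m + r)) :=
  OrderEmbedding.ofStrictMono
    (fun x => ⟨x + r * min (x / m) e, by
      have := x.2
      have : r * min (x / m) e ≤ r * e := Nat.mul_le_mul_left r (min_le_right _ _)
      nlinarith⟩)
    fun x y hxy => by
      have : r * min (x / m) e ≤ r * min (y / m) e :=
        Nat.mul_le_mul_left r (min_le_min_right e (Nat.div_le_div_right hxy.le))
      simp only [Fin.mk_lt_mk]
      omega

theorem spreadLayers_val (x : Fin ((e + 1) * m + r)) :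
    (spreadLayers e m r x : ℕ) = x + r * min (x / m) e :=
  rfl

theorem spreadLayers_castAdd (j : Fin (e + 1)) (y : Fin m) :
    spreadLayers e m r (Fin.castAdd r (finProdFinEquiv (j, y))) =
      finProdFinEquiv (j, Fin.castAdd r y) := by
  have hdiv : ((y : ℕ) + m * j) / m = j := by
    rw [Nat.add_mul_div_left _ _ y.pos, Nat.div_eq_of_lt y.2, zero_add]
  ext
  simp only [spreadLayers_val, Fin.val_castAdd,
    finProdFinEquiv_apply_val, hdiv, min_eq_left (Nat.le_of_lt_succ j.2)]
  ring

/-- The correspondent partition `[τ₁, …, τₑ]` followed by `r` singletons, obtained by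
restricting the correspondent partition of the `τⱼ` extended to `Fin (m + r)`. -/
def corrPad (τ : Fin e → Equiv.Perm (Fin m)) (r : ℕ) :
    Finpartition (univ : Finset (Fin ((e + 1) * m + r))) :=
  fiberPart (corrClass (fun j => (τ j).extendFin r) ∘ spreadLayers e m r)

theorem sameBlock_corrPad (τ : Fin e → Equiv.Perm (Fin m)) (j j' : Fin (e + 1)) (y y' : Fin m) :
    SameBlock (corrPad τ r) (Fin.castAdd r (finProdFinEquiv (j, y)))
        (Fin.castAdd r (finProdFinEquiv (j', y'))) ↔
      (layerPerm τ j)⁻¹ y = (layerPerm τ j')⁻¹ y' := by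
  have key : ∀ j y, (corrClass (fun j => (τ j).extendFin r) ∘ spreadLayers e m r)
      (Fin.castAdd r (finProdFinEquiv (j, y))) = Fin.castAdd r ((layerPerm τ j)⁻¹ y) := by
    intro j y
    induction j using Fin.cases with
    | zero => simp [spreadLayers_castAdd, corrClass_finProdFinEquiv]
    | succ j =>
      simp [spreadLayers_castAdd, corrClass_finProdFinEquiv, Equiv.Perm.extendFin_inv_castAdd]
  rw [corrPad, sameBlock_fiberPart, key, key, Fin.castAdd_inj]

theorem corrPad_injective (r : ℕ) :
    Function.Injective fun τ : Fin e → Equiv.Perm (Fin m) => corrPad τ r := by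
  intro τ τ' h
  ext j i : 2
  have hτ := (sameBlock_corrPad (r := r) τ 0 j.succ i (τ j i)).2 (by simp)
  rw [show corrPad τ r = corrPad τ' r from h, sameBlock_corrPad] at hτ
  simp only [layerPerm_zero, inv_one, Equiv.Perm.coe_one, id_eq, layerPerm_succ,
    Equiv.Perm.inv_def, Equiv.eq_symm_apply] at hτ
  exact hτ.symm

theorem not_kContains_corrPad {k : ℕ} {π : Finpartition (univ : Finset (Fin k))}
    (hπ : ¬ HasPermLE e π) (τ : Fin e → Equiv.Perm (Fin m)) : ¬ KContains (corrPad τ r) π :=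
  fun h => hπ ⟨m + r, _, _, isCorrespondent_fiberPart_corrClass _,
    (kContains_fiberPart_comp _ _).trans h⟩

theorem factorial_pow_le_bAvoid {k : ℕ} {π : Finpartition (univ : Finset (Fin k))}
    (hπ : ¬ HasPermLE e π) (m r : ℕ) : m ! ^ e ≤ BAvoid ((e + 1) * m + r) π := by
  have hcard : Nat.card (Fin e → Equiv.Perm (Fin m)) = m ! ^ e := by
    simp [Nat.card_eq_fintype_card, Fintype.card_perm]
  rw [← hcard, BAvoid]
  exact Nat.card_le_card_of_injective (fun τ => ⟨corrPad τ r, not_kContains_corrPad hπ τ⟩)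
    fun τ τ' h => corrPad_injective r (congrArg Subtype.val h)

end Padding

theorem succ_pow_succ_le_factorial (m : ℕ) :
    ((m : ℝ) + 1) ^ (m + 1) ≤ (2 * Real.exp 1) ^ (m + 1) * m ! := by
  have hexp := Real.pow_div_factorial_le_exp (x := (m : ℝ) + 1) (by positivity) (m + 1)
  rw [div_le_iff₀ (by positivity)] at hexp
  have hfact : ((m + 1)! : ℝ) ≤ 2 ^ (m + 1) * m ! := by
    rw [Nat.factorial_succ, Nat.cast_mul]
    gcongr
    exact_mod_cast (Nat.lt_two_pow_self).le
  calc ((m : ℝ) + 1) ^ (m + 1) ≤ Real.exp ((m : ℝ) + 1) * (m + 1)! := hexp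
    _ ≤ Real.exp 1 ^ (m + 1) * (2 ^ (m + 1) * m !) := by
      rw [Real.exp_one_pow]; push_cast; gcongr
    _ = (2 * Real.exp 1) ^ (m + 1) * m ! := by ring

theorem rpow_le_pow_mul_factorial_pow {n e m : ℕ} (hn : 1 ≤ n) (hm : (e + 1) * m ≤ n)
    (hlt : n < (e + 1) * (m + 1)) :
    (n : ℝ) ^ ((n : ℝ) * (1 - 1 / ((e : ℝ) + 1))) ≤
      ((2 * ((e : ℝ) + 1) * Real.exp 1) ^ (e + 1)) ^ n * (m ! : ℝ) ^ e := by
  have hexponent : (n : ℝ) * (1 - 1 / ((e : ℝ) + 1)) ≤ ((e * (m + 1) : ℕ) : ℝ) := by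
    have hn_le : (n : ℝ) ≤ ((e : ℝ) + 1) * ((m : ℝ) + 1) := by exact_mod_cast hlt.le
    rw [show (n : ℝ) * (1 - 1 / ((e : ℝ) + 1)) = e * (n / ((e : ℝ) + 1)) by field_simp; ring]
    push_cast
    gcongr
    rwa [div_le_iff₀ (by positivity), mul_comm]
  have hK : 1 ≤ 2 * ((e : ℝ) + 1) * Real.exp 1 := by
    nlinarith [Real.add_one_le_exp (1 : ℝ), (e.cast_nonneg : (0 : ℝ) ≤ e)]
  calc (n : ℝ) ^ ((n : ℝ) * (1 - 1 / ((e : ℝ) + 1)))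
      ≤ (n : ℝ) ^ (e * (m + 1)) := by
        rw [← Real.rpow_natCast]
        exact Real.rpow_le_rpow_of_exponent_le (by exact_mod_cast hn) hexponent
    _ ≤ (((e : ℝ) + 1) * ((m : ℝ) + 1)) ^ (e * (m + 1)) := by
        gcongr
        exact_mod_cast hlt.le
    _ = (((e : ℝ) + 1) ^ (m + 1) * ((m : ℝ) + 1) ^ (m + 1)) ^ e := by
        rw [mul_comm e, pow_mul, mul_pow]
    _ ≤ (((e : ℝ) + 1) ^ (m + 1) * ((2 * Real.exp 1) ^ (m + 1) * m !)) ^ e := by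
        gcongr
        exact succ_pow_succ_le_factorial m
    _ = (2 * ((e : ℝ) + 1) * Real.exp 1) ^ (e * (m + 1)) * (m ! : ℝ) ^ e := by
        rw [mul_comm e, pow_mul, ← mul_pow, ← mul_assoc, ← mul_pow]
        congr 3
        ring
    _ ≤ (2 * ((e : ℝ) + 1) * Real.exp 1) ^ ((e + 1) * n) * (m ! : ℝ) ^ e :=
        mul_le_mul_of_nonneg_right (pow_le_pow_right₀ hK (by nlinarith)) (by positivity)
    _ = ((2 * ((e : ℝ) + 1) * Real.exp 1) ^ (e + 1)) ^ n * (m ! : ℝ) ^ e := by rw [pow_mul]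

/-- lower bound `B_n(π) ≥ c₁ⁿ · n^{n(1-1/d)}` when `pm(π) = d ≥ 1`. -/
theorem stmt9 (k d : ℕ) (hd : 1 ≤ d) (π : Finpartition (univ : Finset (Fin k)))
    (hperm : Permutability π d) :
    ∃ c₁ : ℝ, 0 < c₁ ∧ ∀ n : ℕ, 1 ≤ n →
      c₁ ^ n * (n : ℝ) ^ ((n : ℝ) * (1 - 1 / (d : ℝ))) ≤ (BAvoid n π : ℝ) := by
  obtain ⟨e, rfl⟩ : ∃ e, d = e + 1 := ⟨d - 1, by omega⟩
  set K : ℝ := (2 * ((e : ℝ) + 1) * Real.exp 1) ^ (e + 1)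
  refine ⟨K⁻¹, by positivity, fun n hn => ?_⟩
  set m := n / (e + 1)
  have hcount : m ! ^ e ≤ BAvoid n π := by
    simpa only [m, Nat.div_add_mod] using
      factorial_pow_le_bAvoid (hperm.2 e e.lt_succ_self) m (n % (e + 1))
  have hgrowth : (n : ℝ) ^ ((n : ℝ) * (1 - 1 / ((e : ℝ) + 1))) ≤ K ^ n * (m ! : ℝ) ^ e :=
    rpow_le_pow_mul_factorial_pow hn (Nat.mul_div_le n (e + 1)) (Nat.lt_mul_div_succ n e.succ_pos)
  calc K⁻¹ ^ n * (n : ℝ) ^ ((n : ℝ) * (1 - 1 / ((e + 1 : ℕ) : ℝ)))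
      ≤ K⁻¹ ^ n * (K ^ n * (m ! : ℝ) ^ e) := by push_cast; gcongr
    _ = (m ! : ℝ) ^ e := by
      rw [← mul_assoc, ← mul_pow, inv_mul_cancel₀ (by positivity), one_pow, one_mul]
    _ ≤ BAvoid n π := by exact_mod_cast hcount
end

section
/- Subject to nonnegative reals c₁,…,c_n with Σ_{i=1}^n i·c_i = n, the quantity Σ_{i=1}^n (c_i(ln n + 1) − c_i ln c_i) is O(n); more precisely it is at most n·ln a + n where a < (3+√5)/2, hence at most n·(1 + ln((3+√5)/2)). -/
/-!
For `x ≥ 0` and `y > 0`, the bound `log t ≤ t - 1` at `t = y / x` gives `x log y - x log x ≤ y - x`.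
Taking `y = n a⁻ⁱ` bounds the `i`-th summand by `n a⁻ⁱ + i cᵢ log a`, so by `Σ i cᵢ = n` the whole
sum is at most `n Σᵢ a⁻ⁱ + n log a`, and `Σ_{i ≥ 1} a⁻ⁱ ≤ 1` as soon as `a ≥ 2`, which holds for
`a = (3 + √5) / 2`.
-/

open Finset Real

lemma mul_log_sub_mul_log_le {x y : ℝ} (hx : 0 ≤ x) (hy : 0 < y) :
    x * log y - x * log x ≤ y - x := by
  rcases hx.eq_or_lt with rfl | hx
  · simpa using hy.le
  have h := mul_le_mul_of_nonneg_left (log_le_sub_one_of_pos (div_pos hy hx)) hx.le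
  rwa [log_div hy.ne' hx.ne', mul_sub, mul_sub, mul_div_cancel₀ _ hx.ne', mul_one] at h

lemma sum_mul_log_add_one_sub_mul_log_le (s : Finset ℕ) {c : ℕ → ℝ} (hc : ∀ i ∈ s, 0 ≤ c i)
    {N a : ℝ} (hN : 0 < N) (ha : 0 < a) :
    ∑ i ∈ s, (c i * (log N + 1) - c i * log (c i)) ≤
      N * ∑ i ∈ s, a⁻¹ ^ i + log a * ∑ i ∈ s, (i : ℝ) * c i := by
  rw [mul_sum, mul_sum, ← sum_add_distrib]
  refine sum_le_sum fun i hi => ?_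
  have h := mul_log_sub_mul_log_le (hc i hi) (by positivity : 0 < N * a⁻¹ ^ i)
  rw [log_mul hN.ne' (by positivity), log_pow, log_inv] at h
  linarith

lemma sum_Icc_one_inv_pow_le_one {a : ℝ} (ha : 2 ≤ a) (n : ℕ) :
    ∑ i ∈ Icc 1 n, a⁻¹ ^ i ≤ 1 := by
  have ha' : a⁻¹ ≤ 1 / 2 := by rw [inv_le_comm₀ (by linarith) (by norm_num)]; linarith
  calc ∑ i ∈ Icc 1 n, a⁻¹ ^ i = ∑ i ∈ Ico 1 (n + 1), a⁻¹ ^ i := by rw [Ico_add_one_right_eq_Icc]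
    _ ≤ a⁻¹ ^ 1 / (1 - a⁻¹) := geom_sum_Ico_le_of_lt_one (by positivity) (by linarith)
    _ ≤ 1 := by rw [pow_one, div_le_one (by linarith)]; linarith

/-- subject to `c_i ≥ 0` and `Σ i·c_i = n`, the quantity
`Σ (c_i(ln n + 1) − c_i ln c_i)` is at most `n(1 + ln((3+√5)/2))`. -/
theorem stmt17 (n : ℕ) (c : ℕ → ℝ) (hc : ∀ i ∈ Finset.Icc 1 n, 0 ≤ c i)
    (h : ∑ i ∈ Finset.Icc 1 n, (i : ℝ) * c i = (n : ℝ)) :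
    ∑ i ∈ Finset.Icc 1 n, (c i * (Real.log n + 1) - c i * Real.log (c i)) ≤
      (n : ℝ) * (1 + Real.log ((3 + Real.sqrt 5) / 2)) := by
  rcases n.eq_zero_or_pos with rfl | hn
  · simp
  have ha : 2 ≤ (3 + √5) / 2 := by
    have : 1 ≤ √5 := one_le_sqrt.2 (by norm_num)
    linarith
  have hgibbs := sum_mul_log_add_one_sub_mul_log_le (Icc 1 n) hc (N := n) (a := (3 + √5) / 2)
    (by exact_mod_cast hn) (by linarith)
  rw [h] at hgibbs
  calc _ ≤ n * ∑ i ∈ Icc 1 n, ((3 + √5) / 2)⁻¹ ^ i + log ((3 + √5) / 2) * n := hgibbs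
    _ ≤ n * 1 + log ((3 + √5) / 2) * n := by
        gcongr
        exact sum_Icc_one_inv_pow_le_one ha n
    _ = _ := by ring
end
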